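/- arXiv:1302.2501 — 6 statements merged into one kernel-verified Lean document; each statement's English description precedes it below -/
import Mathlib

section
/- With thresholds as above, for any j = 2,...,n and any σ ∈ (σ_j, σ_{j−1}], defining the critical forgery-suppression threshold ρ_crit(σ) = (P_{j−1}/T_j)·(S_j − σ) − Q_{j−1}, we have ρ_crit(σ) ≥ ρ_{j−1}, with equality if and only if σ = σ_{j−1}. -/
/-- The critical forgery-suppression threshold ρ_crit(σ) = (P_{j−1}/T_j)(S_j − σ) − Q_{j−1}
dominates the forgery threshold ρ_{j−1} on (σ_j, σ_{j−1}], with equality iff σ = σ_{j−1}. -/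
theorem critical_threshold_dominates
    (n : ℕ) (hn : 2 ≤ n) (q p : ℕ → ℝ)
    (hq : ∀ k ∈ Finset.Icc 1 n, 0 < q k) (hp : ∀ k ∈ Finset.Icc 1 n, 0 < p k)
    (hqsum : ∑ k ∈ Finset.Icc 1 n, q k = 1) (hpsum : ∑ k ∈ Finset.Icc 1 n, p k = 1)
    (hmono : ∀ k, 1 ≤ k → k < n → q k / p k ≤ q (k+1) / p (k+1)) :
    ∀ j, 2 ≤ j → j ≤ n → ∀ σ : ℝ,
      (∑ k ∈ Finset.Icc j n, q k) - (∑ k ∈ Finset.Icc j n, p k) * (q j / p j) < σ →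
      σ ≤ (∑ k ∈ Finset.Icc (j-1) n, q k)
            - (∑ k ∈ Finset.Icc (j-1) n, p k) * (q (j-1) / p (j-1)) →
      (((∑ k ∈ Finset.Icc 1 (j-1), p k) / (∑ k ∈ Finset.Icc j n, p k))
          * ((∑ k ∈ Finset.Icc j n, q k) - σ) - (∑ k ∈ Finset.Icc 1 (j-1), q k)
        ≥ (∑ k ∈ Finset.Icc 1 (j-1), p k) * (q (j-1) / p (j-1))
            - (∑ k ∈ Finset.Icc 1 (j-1), q k))
      ∧ (((∑ k ∈ Finset.Icc 1 (j-1), p k) / (∑ k ∈ Finset.Icc j n, p k))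
          * ((∑ k ∈ Finset.Icc j n, q k) - σ) - (∑ k ∈ Finset.Icc 1 (j-1), q k)
          = (∑ k ∈ Finset.Icc 1 (j-1), p k) * (q (j-1) / p (j-1))
              - (∑ k ∈ Finset.Icc 1 (j-1), q k)
        ↔ σ = (∑ k ∈ Finset.Icc (j-1) n, q k)
                - (∑ k ∈ Finset.Icc (j-1) n, p k) * (q (j-1) / p (j-1))) := by
  intro j hj2 hjn σ hlo hhi
  set P := ∑ k ∈ Finset.Icc 1 (j-1), p k with hPdef
  set T := ∑ k ∈ Finset.Icc j n, p k with hTdef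
  set S := ∑ k ∈ Finset.Icc j n, q k with hSdef
  set r := q (j-1) / p (j-1) with hrdef
  have hmem : j - 1 ∈ Finset.Icc 1 n := by simp [Finset.mem_Icc]; omega
  have hpj : 0 < p (j-1) := hp _ hmem
  have hsplit : Finset.Icc (j-1) n = insert (j-1) (Finset.Icc j n) := by
    ext k; simp [Finset.mem_Icc, Finset.mem_insert]; omega
  have hnotmem : j - 1 ∉ Finset.Icc j n := by simp [Finset.mem_Icc]; omega
  have hSq : ∑ k ∈ Finset.Icc (j-1) n, q k = q (j-1) + S := by
    rw [hsplit, Finset.sum_insert hnotmem]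
  have hSp : ∑ k ∈ Finset.Icc (j-1) n, p k = p (j-1) + T := by
    rw [hsplit, Finset.sum_insert hnotmem]
  have hpr : p (j-1) * r = q (j-1) := by
    rw [hrdef]; field_simp
  have hT : 0 < T := by
    apply Finset.sum_pos
    · intro k hk; apply hp; simp [Finset.mem_Icc] at hk ⊢; omega
    · exact ⟨j, by simp [Finset.mem_Icc]; omega⟩
  have hP : 0 < P := by
    apply Finset.sum_pos
    · intro k hk; apply hp; simp [Finset.mem_Icc] at hk ⊢; omega
    · exact ⟨1, by simp [Finset.mem_Icc]; omega⟩
  have hsig : (∑ k ∈ Finset.Icc (j-1) n, q k)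
      - (∑ k ∈ Finset.Icc (j-1) n, p k) * r = S - T * r := by
    rw [hSq, hSp, add_mul]; linarith [hpr]
  rw [hsig] at hhi ⊢
  have hkey : T * r ≤ S - σ := by linarith
  constructor
  · have : P * (T * r) ≤ P * (S - σ) := by nlinarith
    have h2 : P * r ≤ P / T * (S - σ) := by
      rw [div_mul_eq_mul_div, le_div_iff₀ hT]; nlinarith
    linarith
  · constructor
    · intro h
      have h2 : P / T * (S - σ) = P * r := by linarith
      have h3 : P * (S - σ) = P * (T * r) := by
        field_simp at h2; nlinarith [h2]
      have h4 : S - σ = T * r := mul_left_cancel₀ (ne_of_gt hP) h3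
      linarith
    · intro h
      subst h
      field_simp
      ring
end

section
/- The piecewise function ρ_crit defined on [σ_n, σ_1] by ρ_crit(σ) = (P_{j−1}/T_j)·(S_j − σ) − Q_{j−1} for σ ∈ [σ_j, σ_{j−1}] (j = 2,...,n) is convex. Equivalently: writing each piece as ρ_j(σ) = m_j σ + b_j with slope m_j = −P_{j−1}/T_j, the slopes satisfy m_j < m_{j−1} for all j = 3,...,n, so that the piecewise linear function with these slopes taken in order of increasing σ has strictly increasing slopes and is convex. -/
/-- Convexity of the critical-privacy boundary: the slopes m_j = −P_{j−1}/T_j of the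
piecewise-linear critical forgery-suppression threshold strictly increase with σ,
i.e. m_j < m_{j−1} for all j = 3,…,n. -/
theorem critical_boundary_slopes_strictly_increasing
    (n : ℕ) (hn : 2 ≤ n) (q p : ℕ → ℝ)
    (hq : ∀ k ∈ Finset.Icc 1 n, 0 < q k) (hp : ∀ k ∈ Finset.Icc 1 n, 0 < p k)
    (hqsum : ∑ k ∈ Finset.Icc 1 n, q k = 1) (hpsum : ∑ k ∈ Finset.Icc 1 n, p k = 1)
    (hmono : ∀ k, 1 ≤ k → k < n → q k / p k ≤ q (k+1) / p (k+1)) :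
    ∀ j, 3 ≤ j → j ≤ n →
      -((∑ k ∈ Finset.Icc 1 (j-1), p k) / (∑ k ∈ Finset.Icc j n, p k))
        < -((∑ k ∈ Finset.Icc 1 (j-2), p k) / (∑ k ∈ Finset.Icc (j-1) n, p k)) := by
  intro j h3 hjn
  obtain ⟨m, rfl⟩ : ∃ m, j = m + 2 := ⟨j - 2, by omega⟩
  have hm1 : 1 ≤ m := by omega
  have hj1 : m + 2 - 1 = m + 1 := by omega
  have hj2 : m + 2 - 2 = m := by omega
  rw [hj1, hj2]
  -- abbreviations
  set A := ∑ k ∈ Finset.Icc 1 m, p k with hA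
  set T := ∑ k ∈ Finset.Icc (m+2) n, p k with hT
  have hsum1 : ∑ k ∈ Finset.Icc 1 (m+1), p k = A + p (m+1) := by
    rw [Finset.sum_Icc_succ_top (by omega : 1 ≤ m + 1)]
  have hmem : m + 1 ∈ Finset.Icc 1 n := Finset.mem_Icc.mpr ⟨by omega, by omega⟩
  have hsum2 : ∑ k ∈ Finset.Icc (m+1) n, p k = p (m+1) + T := by
    have h1 : Finset.Icc (m+1) n = insert (m+1) (Finset.Icc (m+2) n) := by
      rw [show Finset.Icc (m+2) n = Finset.Ioc (m+1) n from Finset.Icc_add_one_left_eq_Ioc _ _,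
        Finset.Ioc_insert_left (by omega : m + 1 ≤ n)]
    rw [h1, Finset.sum_insert (by simp)]
  rw [hsum1, hsum2]
  have hApos : 0 < A := by
    apply Finset.sum_pos
    · intro k hk
      exact hp k (Finset.mem_Icc.mpr ⟨(Finset.mem_Icc.mp hk).1, by
        have := (Finset.mem_Icc.mp hk).2; omega⟩)
    · exact ⟨1, Finset.mem_Icc.mpr ⟨le_refl 1, hm1⟩⟩
  have hTpos : 0 < T := by
    apply Finset.sum_pos
    · intro k hk
      exact hp k (Finset.mem_Icc.mpr ⟨by have := (Finset.mem_Icc.mp hk).1; omega,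
        (Finset.mem_Icc.mp hk).2⟩)
    · exact ⟨m + 2, Finset.mem_Icc.mpr ⟨le_refl _, hjn⟩⟩
  have hppos : 0 < p (m+1) := hp _ hmem
  rw [neg_lt_neg_iff]
  rw [div_lt_div_iff₀ (by linarith) hTpos]
  nlinarith
end

section
/- Let q, p be strictly positive PMFs on n categories with nondecreasing ratios q_k/p_k. Fix indices 1 ≤ i < j ≤ n, ρ ∈ [ρ_i, ρ_{i+1}] and σ ∈ [σ_j, σ_{j−1}] with (ρ,σ) in the noncritical region (ρ ≤ ρ_crit(σ)). Define r*_k = (p_k/P_i)(Q_i + ρ) − q_k for k ≤ i and r*_k = 0 otherwise; s*_k = q_k − (p_k/T_j)(S_j − σ) for k ≥ j and s*_k = 0 otherwise. Then r* and s* are feasible: r*_k ≥ 0, s*_k ≥ 0, q_k + r*_k − s*_k ≥ 0 for all k, Σ_k r*_k = ρ, and Σ_k s*_k = σ. -/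
/-!
Because the ratios `q k / p k` increase, the single inequality `ρ ≥ ρ_i` already bounds every
ratio with `k ≤ i` by `(Q_i + ρ) / P_i`, which is exactly `r*_k ≥ 0`; symmetrically `σ ≥ σ_j`
bounds every ratio with `k ≥ j` from below by `(S_j - σ) / T_j`, which is `s*_k ≥ 0`.
The bound `σ ≤ σ_{j-1}` rewrites as `S_j - σ ≥ T_j q_{j-1} / p_{j-1} ≥ 0`, so on `k ≥ j` the
mass `q_k - s*_k = p_k (S_j - σ) / T_j` stays nonnegative. Both strategies redistribute mass
proportionally to `p`, so their totals are `(Q_i + ρ) - Q_i = ρ` and `S_j - (S_j - σ) = σ`.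
-/

open Finset

lemma sum_Icc_pos {M : Type*} [AddCommMonoid M] [PartialOrder M] [IsOrderedCancelAddMonoid M]
    {f : ℕ → M} {n a b : ℕ} (hf : ∀ k ∈ Icc 1 n, 0 < f k)
    (ha : 1 ≤ a) (hab : a ≤ b) (hb : b ≤ n) : 0 < ∑ k ∈ Icc a b, f k :=
  sum_pos (fun k hk => hf k (by simp only [mem_Icc] at hk ⊢; omega)) (nonempty_Icc.2 hab)

lemma sum_Icc_ite_le {M : Type*} [AddCommMonoid M] (f : ℕ → M) {i n : ℕ} (h : i ≤ n) :
    ∑ k ∈ Icc 1 n, (if k ≤ i then f k else 0) = ∑ k ∈ Icc 1 i, f k := by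
  rw [← sum_filter]
  congr 1
  ext k
  simp only [mem_filter, mem_Icc]
  omega

lemma sum_Icc_ite_ge {M : Type*} [AddCommMonoid M] (f : ℕ → M) {j n : ℕ} (h : 1 ≤ j) :
    ∑ k ∈ Icc 1 n, (if j ≤ k then f k else 0) = ∑ k ∈ Icc j n, f k := by
  rw [← sum_filter]
  congr 1
  ext k
  simp only [mem_filter, mem_Icc]
  omega

lemma sum_div_sum_mul {ι K : Type*} [Field K] (s : Finset ι) (p : ι → K) (x : K)
    (hp : ∑ k ∈ s, p k ≠ 0) :
    ∑ k ∈ s, p k / (∑ m ∈ s, p m) * x = x := by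
  rw [← sum_mul, ← sum_div, div_self hp, one_mul]

lemma monotoneOn_Icc_of_le_succ {α : Type*} [Preorder α] {f : ℕ → α} {n : ℕ}
    (hf : ∀ k, 1 ≤ k → k < n → f k ≤ f (k + 1)) : MonotoneOn f (Set.Icc 1 n) :=
  monotoneOn_of_le_succ Set.ordConnected_Icc fun k _ hk hk' => by
    rw [Order.succ_eq_add_one] at hk' ⊢
    exact hf k hk.1 (by simp only [Set.mem_Icc] at hk'; omega)

lemma le_div_mul_of_div_le_div {K : Type*} [Field K] [LinearOrder K] [IsStrictOrderedRing K]
    {q p x P : K} (hp : 0 < p) (hP : 0 < P) (h : q / p ≤ x / P) :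
    q ≤ p / P * x := by
  rw [div_le_div_iff₀ hp hP] at h
  rw [div_mul_eq_mul_div, le_div_iff₀ hP]
  linarith

lemma div_mul_le_of_div_le_div {K : Type*} [Field K] [LinearOrder K] [IsStrictOrderedRing K]
    {q p x T : K} (hp : 0 < p) (hT : 0 < T) (h : x / T ≤ q / p) :
    p / T * x ≤ q := by
  rw [div_le_div_iff₀ hT hp] at h
  rw [div_mul_eq_mul_div, div_le_iff₀ hT]
  linarith

lemma le_forgery_share_of_threshold_le {q p : ℕ → ℝ} {n i : ℕ} {ρ : ℝ}
    (hmono : ∀ k, 1 ≤ k → k < n → q k / p k ≤ q (k + 1) / p (k + 1))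
    (hp : ∀ k ∈ Icc 1 n, 0 < p k) (hi : 1 ≤ i) (hin : i ≤ n)
    (hρ : (∑ k ∈ Icc 1 i, p k) * (q i / p i) - ∑ k ∈ Icc 1 i, q k ≤ ρ) :
    ∀ k ∈ Icc 1 i, q k ≤ p k / (∑ m ∈ Icc 1 i, p m) * ((∑ m ∈ Icc 1 i, q m) + ρ) := by
  intro k hk
  have hP := sum_Icc_pos hp le_rfl hi hin
  have hk' : k ∈ Icc 1 n := by simp only [mem_Icc] at hk ⊢; omega
  refine le_div_mul_of_div_le_div (hp k hk') hP ?_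
  calc q k / p k ≤ q i / p i :=
        monotoneOn_Icc_of_le_succ hmono (by simpa using hk') ⟨hi, hin⟩ (mem_Icc.1 hk).2
    _ ≤ _ := by rw [le_div_iff₀ hP]; linarith

lemma suppression_share_le_of_threshold_le {q p : ℕ → ℝ} {n j : ℕ} {σ : ℝ}
    (hmono : ∀ k, 1 ≤ k → k < n → q k / p k ≤ q (k + 1) / p (k + 1))
    (hp : ∀ k ∈ Icc 1 n, 0 < p k) (hj : 1 ≤ j) (hjn : j ≤ n)
    (hσ : (∑ k ∈ Icc j n, q k) - (∑ k ∈ Icc j n, p k) * (q j / p j) ≤ σ) :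
    ∀ k ∈ Icc j n, p k / (∑ m ∈ Icc j n, p m) * ((∑ m ∈ Icc j n, q m) - σ) ≤ q k := by
  intro k hk
  have hT := sum_Icc_pos hp hj hjn le_rfl
  have hk' : k ∈ Icc 1 n := by simp only [mem_Icc] at hk ⊢; omega
  refine div_mul_le_of_div_le_div (hp k hk') hT ?_
  calc _ ≤ q j / p j := by rw [div_le_iff₀ hT]; linarith
    _ ≤ q k / p k :=
        monotoneOn_Icc_of_le_succ hmono ⟨hj, hjn⟩ (by simpa using hk') (mem_Icc.1 hk).1

lemma le_sum_Icc_of_le_suppression_threshold {q p : ℕ → ℝ} {n j : ℕ} {σ : ℝ}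
    (hp : ∀ k ∈ Icc 1 n, 0 < p k) (hq : ∀ k ∈ Icc 1 n, 0 ≤ q k) (hj : 1 < j) (hjn : j ≤ n)
    (hσ : σ ≤ (∑ k ∈ Icc (j - 1) n, q k)
      - (∑ k ∈ Icc (j - 1) n, p k) * (q (j - 1) / p (j - 1))) :
    σ ≤ ∑ k ∈ Icc j n, q k := by
  obtain ⟨m, rfl⟩ : ∃ m, j = m + 1 := ⟨j - 1, by omega⟩
  have hm : m ∈ Icc 1 n := by simp only [mem_Icc]; omega
  have hpm := hp m hm
  have hT := sum_Icc_pos hp hj.le hjn le_rfl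
  rw [Nat.add_sub_cancel, ← add_sum_Ioc_eq_sum_Icc (by omega),
    ← add_sum_Ioc_eq_sum_Icc (by omega), ← Icc_add_one_left_eq_Ioc, add_mul] at hσ
  have hcancel : q m - p m * (q m / p m) = 0 := by field_simp; ring
  linarith [mul_nonneg hT.le (div_nonneg (hq m hm) hpm.le)]

theorem optimal_strategies_feasible_general
    (n : ℕ) (q p : ℕ → ℝ)
    (hq : ∀ k ∈ Finset.Icc 1 n, 0 < q k) (hp : ∀ k ∈ Finset.Icc 1 n, 0 < p k)
    (hmono : ∀ k, 1 ≤ k → k < n → q k / p k ≤ q (k+1) / p (k+1))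
    (i j : ℕ) (hi : 1 ≤ i) (hij : i < j) (hj : j ≤ n)
    (ρ σ : ℝ)
    (hρlo : (∑ k ∈ Finset.Icc 1 i, p k) * (q i / p i) - ∑ k ∈ Finset.Icc 1 i, q k ≤ ρ)
    (hσlo : (∑ k ∈ Finset.Icc j n, q k)
              - (∑ k ∈ Finset.Icc j n, p k) * (q j / p j) ≤ σ)
    (hσhi : σ ≤ (∑ k ∈ Finset.Icc (j-1) n, q k)
              - (∑ k ∈ Finset.Icc (j-1) n, p k) * (q (j-1) / p (j-1)))
    (r s : ℕ → ℝ)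
    (hr : ∀ k, r k = if k ≤ i then
        (p k / (∑ m ∈ Finset.Icc 1 i, p m)) * ((∑ m ∈ Finset.Icc 1 i, q m) + ρ) - q k
      else 0)
    (hs : ∀ k, s k = if j ≤ k then
        q k - (p k / (∑ m ∈ Finset.Icc j n, p m)) * ((∑ m ∈ Finset.Icc j n, q m) - σ)
      else 0) :
    (∀ k ∈ Finset.Icc 1 n, 0 ≤ r k) ∧
    (∀ k ∈ Finset.Icc 1 n, 0 ≤ s k) ∧
    (∀ k ∈ Finset.Icc 1 n, 0 ≤ q k + r k - s k) ∧
    (∑ k ∈ Finset.Icc 1 n, r k = ρ) ∧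
    (∑ k ∈ Finset.Icc 1 n, s k = σ) := by
  have hin : i ≤ n := by omega
  have hP := sum_Icc_pos hp le_rfl hi hin
  have hT := sum_Icc_pos hp (by omega) hj le_rfl
  have hforge := le_forgery_share_of_threshold_le hmono hp hi hin hρlo
  have hsupp := suppression_share_le_of_threshold_le hmono hp (by omega) hj hσlo
  have hSσ := sub_nonneg.2 (le_sum_Icc_of_le_suppression_threshold hp
    (fun k hk => (hq k hk).le) (by omega) hj hσhi)
  refine ⟨fun k hk => ?_, fun k hk => ?_, fun k hk => ?_, ?_, ?_⟩
  · rw [hr]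
    split_ifs with hki
    · exact sub_nonneg.2 (hforge k (mem_Icc.2 ⟨(mem_Icc.1 hk).1, hki⟩))
    · rfl
  · rw [hs]
    split_ifs with hjk
    · exact sub_nonneg.2 (hsupp k (mem_Icc.2 ⟨hjk, (mem_Icc.1 hk).2⟩))
    · rfl
  · have hqk := hq k hk
    rw [hr, hs]
    split_ifs with hki hjk hjk
    · omega
    · linarith [hforge k (mem_Icc.2 ⟨(mem_Icc.1 hk).1, hki⟩)]
    · linarith [mul_nonneg (div_nonneg (hp k hk).le hT.le) hSσ]
    · linarith
  · rw [sum_congr rfl fun k _ => hr k, sum_Icc_ite_le _ hin, sum_sub_distrib,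
      sum_div_sum_mul _ _ _ hP.ne']
    ring
  · rw [sum_congr rfl fun k _ => hs k, sum_Icc_ite_ge _ (by omega), sum_sub_distrib,
      sum_div_sum_mul _ _ _ hT.ne']
    ring

/-- Feasibility of the optimal forgery and suppression strategies: on the noncritical
region, r*_k = (p_k/P_i)(Q_i+ρ) − q_k for k ≤ i (else 0) and
s*_k = q_k − (p_k/T_j)(S_j−σ) for k ≥ j (else 0) are nonnegative, keep q_k+r_k−s_k
nonnegative, and sum to ρ and σ respectively. -/
theorem optimal_strategies_feasible
    (n : ℕ) (hn : 2 ≤ n) (q p : ℕ → ℝ)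
    (hq : ∀ k ∈ Finset.Icc 1 n, 0 < q k) (hp : ∀ k ∈ Finset.Icc 1 n, 0 < p k)
    (hqsum : ∑ k ∈ Finset.Icc 1 n, q k = 1) (hpsum : ∑ k ∈ Finset.Icc 1 n, p k = 1)
    (hmono : ∀ k, 1 ≤ k → k < n → q k / p k ≤ q (k+1) / p (k+1))
    (i j : ℕ) (hi : 1 ≤ i) (hij : i < j) (hj : j ≤ n)
    (ρ σ : ℝ)
    (hρlo : (∑ k ∈ Finset.Icc 1 i, p k) * (q i / p i) - ∑ k ∈ Finset.Icc 1 i, q k ≤ ρ)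
    (hρhi : ρ ≤ (∑ k ∈ Finset.Icc 1 i, p k) * (q (i+1) / p (i+1))
              - ∑ k ∈ Finset.Icc 1 i, q k)
    (hσlo : (∑ k ∈ Finset.Icc j n, q k)
              - (∑ k ∈ Finset.Icc j n, p k) * (q j / p j) ≤ σ)
    (hσhi : σ ≤ (∑ k ∈ Finset.Icc (j-1) n, q k)
              - (∑ k ∈ Finset.Icc (j-1) n, p k) * (q (j-1) / p (j-1)))
    (hnoncrit : ρ ≤ ((∑ k ∈ Finset.Icc 1 (j-1), p k) / (∑ k ∈ Finset.Icc j n, p k))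
                  * ((∑ k ∈ Finset.Icc j n, q k) - σ) - ∑ k ∈ Finset.Icc 1 (j-1), q k)
    (r s : ℕ → ℝ)
    (hr : ∀ k, r k = if k ≤ i then
        (p k / (∑ m ∈ Finset.Icc 1 i, p m)) * ((∑ m ∈ Finset.Icc 1 i, q m) + ρ) - q k
      else 0)
    (hs : ∀ k, s k = if j ≤ k then
        q k - (p k / (∑ m ∈ Finset.Icc j n, p m)) * ((∑ m ∈ Finset.Icc j n, q m) - σ)
      else 0) :
    (∀ k ∈ Finset.Icc 1 n, 0 ≤ r k) ∧
    (∀ k ∈ Finset.Icc 1 n, 0 ≤ s k) ∧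
    (∀ k ∈ Finset.Icc 1 n, 0 ≤ q k + r k - s k) ∧
    (∑ k ∈ Finset.Icc 1 n, r k = ρ) ∧
    (∑ k ∈ Finset.Icc 1 n, s k = σ) :=
  optimal_strategies_feasible_general n q p hq hp hmono i j hi hij hj ρ σ hρlo hσlo hσhi r s hr hs
end

section
/- Under the setting of the optimal strategies, the optimal apparent profile t*_k = (q_k + r*_k − s*_k)/(1+ρ−σ) satisfies: t*_k/p_k = φ(ρ,σ) := (Q_i + ρ)/((1+ρ−σ)P_i) for all k = 1,...,i; t*_k/p_k = χ(ρ,σ) := (S_j − σ)/((1+ρ−σ)T_j) for all k = j,...,n; and φ(ρ,σ) ≤ t*_{i+1}/p_{i+1} ≤ ... ≤ t*_{j−1}/p_{j−1} ≤ χ(ρ,σ). -/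
/-- Proportionality of the optimal apparent profile: t*_k/p_k equals
φ(ρ,σ) = (Q_i+ρ)/((1+ρ−σ)P_i) for k ≤ i, equals χ(ρ,σ) = (S_j−σ)/((1+ρ−σ)T_j) for
k ≥ j, and in between the ratios are sandwiched between φ and χ and nondecreasing. -/
theorem optimal_profile_proportionality
    (n : ℕ) (hn : 2 ≤ n) (q p : ℕ → ℝ)
    (hq : ∀ k ∈ Finset.Icc 1 n, 0 < q k) (hp : ∀ k ∈ Finset.Icc 1 n, 0 < p k)
    (hqsum : ∑ k ∈ Finset.Icc 1 n, q k = 1) (hpsum : ∑ k ∈ Finset.Icc 1 n, p k = 1)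
    (hmono : ∀ k, 1 ≤ k → k < n → q k / p k ≤ q (k+1) / p (k+1))
    (i j : ℕ) (hi : 1 ≤ i) (hij : i < j) (hj : j ≤ n)
    (ρ σ : ℝ) (hρ : 0 ≤ ρ) (hσ0 : 0 ≤ σ) (hσ1 : σ < 1)
    (hρlo : (∑ k ∈ Finset.Icc 1 i, p k) * (q i / p i) - ∑ k ∈ Finset.Icc 1 i, q k ≤ ρ)
    (hρhi : ρ ≤ (∑ k ∈ Finset.Icc 1 i, p k) * (q (i+1) / p (i+1))
              - ∑ k ∈ Finset.Icc 1 i, q k)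
    (hσlo : (∑ k ∈ Finset.Icc j n, q k)
              - (∑ k ∈ Finset.Icc j n, p k) * (q j / p j) ≤ σ)
    (hσhi : σ ≤ (∑ k ∈ Finset.Icc (j-1) n, q k)
              - (∑ k ∈ Finset.Icc (j-1) n, p k) * (q (j-1) / p (j-1)))
    (r s t : ℕ → ℝ)
    (hr : ∀ k, r k = if k ≤ i then
        (p k / (∑ m ∈ Finset.Icc 1 i, p m)) * ((∑ m ∈ Finset.Icc 1 i, q m) + ρ) - q k
      else 0)
    (hs : ∀ k, s k = if j ≤ k then
        q k - (p k / (∑ m ∈ Finset.Icc j n, p m)) * ((∑ m ∈ Finset.Icc j n, q m) - σ)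
      else 0)
    (ht : ∀ k, t k = (q k + r k - s k) / (1 + ρ - σ)) :
    (∀ k, 1 ≤ k → k ≤ i →
      t k / p k = ((∑ m ∈ Finset.Icc 1 i, q m) + ρ)
                    / ((1 + ρ - σ) * (∑ m ∈ Finset.Icc 1 i, p m))) ∧
    (∀ k, j ≤ k → k ≤ n →
      t k / p k = ((∑ m ∈ Finset.Icc j n, q m) - σ)
                    / ((1 + ρ - σ) * (∑ m ∈ Finset.Icc j n, p m))) ∧
    (∀ k, i < k → k < j →
      ((∑ m ∈ Finset.Icc 1 i, q m) + ρ)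
          / ((1 + ρ - σ) * (∑ m ∈ Finset.Icc 1 i, p m)) ≤ t k / p k ∧
      t k / p k ≤ ((∑ m ∈ Finset.Icc j n, q m) - σ)
          / ((1 + ρ - σ) * (∑ m ∈ Finset.Icc j n, p m))) ∧
    (∀ k, i < k → k + 1 < j → t k / p k ≤ t (k+1) / p (k+1)) := by
  have hchain : ∀ a b : ℕ, 1 ≤ a → a ≤ b → b ≤ n → q a / p a ≤ q b / p b := by
    intro a b ha hab hbn
    induction b with
    | zero => omega
    | succ m ih =>
      rcases Nat.eq_or_lt_of_le hab with h | h
      · rw [h]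
      · exact (ih (by omega) (by omega)).trans (hmono m (by omega) (by omega))
  have hden : 0 < 1 + ρ - σ := by linarith
  have hPi : 0 < ∑ m ∈ Finset.Icc 1 i, p m := by
    apply Finset.sum_pos
    · intro k hk
      simp only [Finset.mem_Icc] at hk
      exact hp k (Finset.mem_Icc.mpr ⟨hk.1, by omega⟩)
    · exact ⟨1, Finset.mem_Icc.mpr ⟨le_refl 1, hi⟩⟩
  have hTj : 0 < ∑ m ∈ Finset.Icc j n, p m := by
    apply Finset.sum_pos
    · intro k hk
      simp only [Finset.mem_Icc] at hk
      exact hp k (Finset.mem_Icc.mpr ⟨by omega, hk.2⟩)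
    · exact ⟨j, Finset.mem_Icc.mpr ⟨le_refl j, hj⟩⟩
  have hQiS : σ ≤ (∑ m ∈ Finset.Icc j n, q m) - (∑ m ∈ Finset.Icc j n, p m) * (q (j-1) / p (j-1)) := by
    have hj1 : 1 ≤ j - 1 := by omega
    have hsplit : ∀ f : ℕ → ℝ, ∑ m ∈ Finset.Icc (j-1) n, f m = f (j-1) + ∑ m ∈ Finset.Icc j n, f m := by
      intro f
      have : Finset.Icc (j-1) n = insert (j-1) (Finset.Icc j n) := by
        ext x
        simp only [Finset.mem_insert, Finset.mem_Icc]
        omega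
      rw [this, Finset.sum_insert (by simp only [Finset.mem_Icc]; omega)]
    rw [hsplit q, hsplit p] at hσhi
    have hpj1 : 0 < p (j-1) := hp _ (Finset.mem_Icc.mpr ⟨by omega, by omega⟩)
    have : p (j-1) * (q (j-1) / p (j-1)) = q (j-1) := by field_simp
    nlinarith [hσhi]
  refine ⟨?_, ?_, ?_, ?_⟩
  · intro k h1 hk
    have hpk : 0 < p k := hp k (Finset.mem_Icc.mpr ⟨h1, by omega⟩)
    rw [ht, hr, hs, if_pos hk, if_neg (by omega)]
    field_simp
    ring
  · intro k hjk hkn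
    have hpk : 0 < p k := hp k (Finset.mem_Icc.mpr ⟨by omega, hkn⟩)
    rw [ht, hr, hs, if_neg (by omega), if_pos hjk]
    field_simp
    ring
  · intro k hik hkj
    have h1k : 1 ≤ k := by omega
    have hkn : k ≤ n := by omega
    have hpk : 0 < p k := hp k (Finset.mem_Icc.mpr ⟨h1k, hkn⟩)
    have htk : t k / p k = (q k / p k) / (1 + ρ - σ) := by
      rw [ht, hr, hs, if_neg (by omega), if_neg (by omega)]
      simp only [add_zero, sub_zero]
      rw [div_div, div_div, mul_comm]
    constructor
    · rw [htk]
      have hpip : 0 < p (i+1) := hp _ (Finset.mem_Icc.mpr ⟨by omega, by omega⟩)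
      have h1 : (∑ m ∈ Finset.Icc 1 i, q m) + ρ ≤ (∑ m ∈ Finset.Icc 1 i, p m) * (q (i+1) / p (i+1)) := by linarith
      have h2 : q (i+1) / p (i+1) ≤ q k / p k := hchain (i+1) k (by omega) (by omega) hkn
      rw [div_le_div_iff₀ (by positivity) hden]
      calc ((∑ m ∈ Finset.Icc 1 i, q m) + ρ) * (1 + ρ - σ)
          ≤ ((∑ m ∈ Finset.Icc 1 i, p m) * (q k / p k)) * (1 + ρ - σ) := by
            nlinarith [h1.trans (by nlinarith : (∑ m ∈ Finset.Icc 1 i, p m) * (q (i+1) / p (i+1)) ≤ (∑ m ∈ Finset.Icc 1 i, p m) * (q k / p k))]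
        _ = q k / p k * ((1 + ρ - σ) * ∑ m ∈ Finset.Icc 1 i, p m) := by ring
    · rw [htk]
      have h2 : q k / p k ≤ q (j-1) / p (j-1) := hchain k (j-1) h1k (by omega) (by omega)
      have h1 : (∑ m ∈ Finset.Icc j n, p m) * (q (j-1) / p (j-1)) ≤ (∑ m ∈ Finset.Icc j n, q m) - σ := by linarith
      rw [div_le_div_iff₀ hden (by positivity)]
      calc q k / p k * ((1 + ρ - σ) * ∑ m ∈ Finset.Icc j n, p m)
          = ((∑ m ∈ Finset.Icc j n, p m) * (q k / p k)) * (1 + ρ - σ) := by ring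
        _ ≤ ((∑ m ∈ Finset.Icc j n, q m) - σ) * (1 + ρ - σ) := by
            nlinarith [(by nlinarith : (∑ m ∈ Finset.Icc j n, p m) * (q k / p k) ≤ (∑ m ∈ Finset.Icc j n, p m) * (q (j-1) / p (j-1)))]
  · intro k hik hkj
    have hpk : 0 < p k := hp k (Finset.mem_Icc.mpr ⟨by omega, by omega⟩)
    have hpk1 : 0 < p (k+1) := hp _ (Finset.mem_Icc.mpr ⟨by omega, by omega⟩)
    have htk : t k / p k = (q k / p k) / (1 + ρ - σ) := by
      rw [ht, hr, hs, if_neg (by omega), if_neg (by omega)]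
      simp only [add_zero, sub_zero]
      rw [div_div, div_div, mul_comm]
    have htk1 : t (k+1) / p (k+1) = (q (k+1) / p (k+1)) / (1 + ρ - σ) := by
      rw [ht, hr, hs, if_neg (by omega), if_neg (by omega)]
      simp only [add_zero, sub_zero]
      rw [div_div, div_div, mul_comm]
    rw [htk, htk1]
    exact div_le_div_of_nonneg_right (hmono k (by omega) (by omega)) hden.le
end

section
/- When ρ = ρ_crit(σ) (and σ ∈ [σ_j, σ_{j−1}]), the optimal apparent profile equals the population profile: defining r_k = p_k(1 + ρ_crit(σ) − σ) − q_k for k = 1,...,j−1 and s_k = q_k − p_k(1 + ρ_crit(σ) − σ) for k = j,...,n (all other components zero), we have t_k = (q_k + r_k − s_k)/(1 + ρ_crit(σ) − σ) = p_k for all k, and hence D(t‖p) = 0. -/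
/-!
Put `c = 1 + ρ_crit(σ) - σ`. Using `P_{<j} + P_{≥j} = 1 = Q_{<j} + Q_{≥j}`, the definition of
`ρ_crit` says exactly `c * P_{≥j} = Q_{≥j} - σ`, so the interval constraint on `σ` turns into
`q_{j-1}/p_{j-1} ≤ c ≤ q_j/p_j`. By monotonicity of the ratios this gives `r_k = c p_k - q_k ≥ 0`
for `k < j` and `s_k = q_k - c p_k ≥ 0` for `k ≥ j`. Every component of `q + r - s` equals
`c p_k` and `c > 0`, so normalizing by `c` returns `p`.
-/

open Finset

lemma sum_Icc_one_add_sum_Icc_succ {M : Type*} [AddCommMonoid M] (f : ℕ → M) {m n : ℕ}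
    (h : m ≤ n) : ∑ k ∈ Icc 1 m, f k + ∑ k ∈ Icc (m + 1) n, f k = ∑ k ∈ Icc 1 n, f k := by
  simpa only [← Icc_add_one_left_eq_Ioc, zero_add] using sum_Ioc_consecutive f m.zero_le h

lemma critical_level_mul_tail {P₁ P₂ Q₁ Q₂ σ ρ : ℝ} (hP : P₁ + P₂ = 1) (hQ : Q₁ + Q₂ = 1)
    (hP₂ : P₂ ≠ 0) (hρ : ρ = P₁ / P₂ * (Q₂ - σ) - Q₁) : (1 + ρ - σ) * P₂ = Q₂ - σ := by
  rw [hρ]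
  field_simp
  linear_combination (Q₂ - σ) * hP - P₂ * hQ

lemma level_le_of_sub_mul_le {c σ P Q R : ℝ} (hP : 0 < P) (hc : c * P = Q - σ)
    (hσ : Q - P * R ≤ σ) : c ≤ R :=
  le_of_mul_le_mul_right (by linarith) hP

lemma ratio_le_level_of_le_sub {c σ P Q a b : ℝ} (ha : a ≠ 0) (hP : 0 < P) (hc : c * P = Q - σ)
    (hσ : σ ≤ b + Q - (a + P) * (b / a)) : b / a ≤ c := by
  have hab : a * (b / a) = b := mul_div_cancel₀ b ha
  exact le_of_mul_le_mul_right (by linarith) hP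

section Fill

variable {q p r s : ℕ → ℝ} {m n : ℕ} {c : ℝ}

lemma fill_balance (hr : ∀ k, r k = if k ≤ m then p k * c - q k else 0)
    (hs : ∀ k, s k = if m + 1 ≤ k then q k - p k * c else 0) (k : ℕ) :
    q k + r k - s k = p k * c := by
  rw [hr, hs]
  split_ifs <;> first | omega | ring

lemma sum_fill_lower (hr : ∀ k, r k = if k ≤ m then p k * c - q k else 0) (hm : m ≤ n) :
    ∑ k ∈ Icc 1 n, r k = c * ∑ k ∈ Icc 1 m, p k - ∑ k ∈ Icc 1 m, q k := by
  have hupper : ∑ k ∈ Icc (m + 1) n, r k = 0 :=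
    sum_eq_zero fun k hk => by rw [hr, if_neg (by simp only [mem_Icc] at hk; omega)]
  rw [← sum_Icc_one_add_sum_Icc_succ r hm, hupper, add_zero, mul_sum, ← sum_sub_distrib]
  exact sum_congr rfl fun k hk => by rw [hr, if_pos (mem_Icc.1 hk).2, mul_comm]

lemma sum_fill_upper (hs : ∀ k, s k = if m + 1 ≤ k then q k - p k * c else 0) (hm : m ≤ n) :
    ∑ k ∈ Icc 1 n, s k = ∑ k ∈ Icc (m + 1) n, q k - c * ∑ k ∈ Icc (m + 1) n, p k := by
  have hlower : ∑ k ∈ Icc 1 m, s k = 0 :=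
    sum_eq_zero fun k hk => by rw [hs, if_neg (by simp only [mem_Icc] at hk; omega)]
  rw [← sum_Icc_one_add_sum_Icc_succ s hm, hlower, zero_add, mul_sum, ← sum_sub_distrib]
  exact sum_congr rfl fun k hk => by rw [hs, if_pos (mem_Icc.1 hk).1, mul_comm c]

lemma fill_lower_nonneg (hr : ∀ k, r k = if k ≤ m then p k * c - q k else 0)
    (hratio : MonotoneOn (fun k => q k / p k) (Set.Icc 1 n)) (hp : ∀ k ∈ Icc 1 n, 0 < p k)
    (hm : m ≤ n) (hc : q m / p m ≤ c) : ∀ k ∈ Icc 1 n, 0 ≤ r k := by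
  intro k hk
  rw [mem_Icc] at hk
  rw [hr]
  split_ifs with hkm
  · have hk_le : q k / p k ≤ c := (hratio ⟨hk.1, hk.2⟩ ⟨hk.1.trans hkm, hm⟩ hkm).trans hc
    rw [div_le_iff₀ (hp k (mem_Icc.2 hk))] at hk_le
    linarith
  · rfl

lemma fill_upper_nonneg (hs : ∀ k, s k = if m + 1 ≤ k then q k - p k * c else 0)
    (hratio : MonotoneOn (fun k => q k / p k) (Set.Icc 1 n)) (hp : ∀ k ∈ Icc 1 n, 0 < p k)
    (hc : c ≤ q (m + 1) / p (m + 1)) : ∀ k ∈ Icc 1 n, 0 ≤ s k := by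
  intro k hk
  rw [mem_Icc] at hk
  rw [hs]
  split_ifs with hmk
  · have hk_ge : c ≤ q k / p k := hc.trans (hratio ⟨by omega, hmk.trans hk.2⟩ ⟨hk.1, hk.2⟩ hmk)
    rw [le_div_iff₀ (hp k (mem_Icc.2 hk))] at hk_ge
    linarith
  · rfl

end Fill

theorem critical_threshold_zero_risk_general
    (n : ℕ) (q p : ℕ → ℝ)
    (hq : ∀ k ∈ Finset.Icc 1 n, 0 < q k) (hp : ∀ k ∈ Finset.Icc 1 n, 0 < p k)
    (hqsum : ∑ k ∈ Finset.Icc 1 n, q k = 1) (hpsum : ∑ k ∈ Finset.Icc 1 n, p k = 1)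
    (hmono : ∀ k, 1 ≤ k → k < n → q k / p k ≤ q (k+1) / p (k+1))
    (j : ℕ) (hj2 : 2 ≤ j) (hjn : j ≤ n)
    (σ ρc : ℝ)
    (hσlo : (∑ k ∈ Finset.Icc j n, q k)
              - (∑ k ∈ Finset.Icc j n, p k) * (q j / p j) ≤ σ)
    (hσhi : σ ≤ (∑ k ∈ Finset.Icc (j-1) n, q k)
              - (∑ k ∈ Finset.Icc (j-1) n, p k) * (q (j-1) / p (j-1)))
    (hρc : ρc = ((∑ k ∈ Finset.Icc 1 (j-1), p k) / (∑ k ∈ Finset.Icc j n, p k))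
              * ((∑ k ∈ Finset.Icc j n, q k) - σ) - ∑ k ∈ Finset.Icc 1 (j-1), q k)
    (r s t : ℕ → ℝ)
    (hr : ∀ k, r k = if k ≤ j - 1 then p k * (1 + ρc - σ) - q k else 0)
    (hs : ∀ k, s k = if j ≤ k then q k - p k * (1 + ρc - σ) else 0)
    (ht : ∀ k, t k = (q k + r k - s k) / (1 + ρc - σ)) :
    (∀ k ∈ Finset.Icc 1 n, 0 ≤ r k) ∧
    (∀ k ∈ Finset.Icc 1 n, 0 ≤ s k) ∧
    (∑ k ∈ Finset.Icc 1 n, r k = ρc) ∧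
    (∑ k ∈ Finset.Icc 1 n, s k = σ) ∧
    (∀ k ∈ Finset.Icc 1 n, t k = p k) ∧
    (∑ k ∈ Finset.Icc 1 n, t k * Real.logb 2 (t k / p k) = 0) := by
  obtain ⟨m, rfl⟩ : ∃ m, j = m + 1 := ⟨j - 1, by omega⟩
  simp only [Nat.add_sub_cancel] at hσhi hρc hr
  have hm : m ≤ n := by omega
  have hm_mem : m ∈ Icc 1 n := mem_Icc.2 ⟨by omega, hm⟩
  have hratio : MonotoneOn (fun k => q k / p k) (Set.Icc 1 n) :=
    monotoneOn_of_le_add_one Set.ordConnected_Icc fun k _ hk hk1 => hmono k hk.1 hk1.2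
  have htail_pos : 0 < ∑ k ∈ Icc (m + 1) n, p k :=
    sum_pos (fun k hk => hp k (by simp only [mem_Icc] at hk ⊢; omega))
      ⟨m + 1, mem_Icc.2 ⟨le_rfl, hjn⟩⟩
  rw [← add_sum_Ioc_eq_sum_Icc hm, ← add_sum_Ioc_eq_sum_Icc hm, ← Icc_add_one_left_eq_Ioc] at hσhi
  set c := 1 + ρc - σ
  have hP := (sum_Icc_one_add_sum_Icc_succ p hm).trans hpsum
  have hQ := (sum_Icc_one_add_sum_Icc_succ q hm).trans hqsum
  have hc : c * ∑ k ∈ Icc (m + 1) n, p k = ∑ k ∈ Icc (m + 1) n, q k - σ :=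
    critical_level_mul_tail hP hQ htail_pos.ne' hρc
  have hc_lo : q m / p m ≤ c := ratio_le_level_of_le_sub (hp m hm_mem).ne' htail_pos hc hσhi
  have hc_pos : 0 < c := (div_pos (hq m hm_mem) (hp m hm_mem)).trans_le hc_lo
  have htp : ∀ k ∈ Icc 1 n, t k = p k := fun k _ => by
    rw [ht, fill_balance hr hs, mul_div_cancel_right₀ _ hc_pos.ne']
  refine ⟨fill_lower_nonneg hr hratio hp hm hc_lo,
    fill_upper_nonneg hs hratio hp (level_le_of_sub_mul_le htail_pos hc hσlo), ?_, ?_, htp,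
    sum_eq_zero fun k hk => by rw [htp k hk, div_self (hp k hk).ne', Real.logb_one, mul_zero]⟩
  · rw [sum_fill_lower hr hm]
    linear_combination c * hP - hc - hQ
  · rw [sum_fill_upper hs hm]
    linear_combination -hc

/-- At the critical threshold ρ = ρ_crit(σ), the strategies
r_k = p_k(1+ρ_crit−σ) − q_k (k < j) and s_k = q_k − p_k(1+ρ_crit−σ) (k ≥ j) are
nonnegative, sum to ρ_crit(σ) and σ respectively, and make the apparent profile
equal the population profile, so the KL divergence vanishes. -/
theorem critical_threshold_zero_risk
    (n : ℕ) (hn : 2 ≤ n) (q p : ℕ → ℝ)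
    (hq : ∀ k ∈ Finset.Icc 1 n, 0 < q k) (hp : ∀ k ∈ Finset.Icc 1 n, 0 < p k)
    (hqsum : ∑ k ∈ Finset.Icc 1 n, q k = 1) (hpsum : ∑ k ∈ Finset.Icc 1 n, p k = 1)
    (hmono : ∀ k, 1 ≤ k → k < n → q k / p k ≤ q (k+1) / p (k+1))
    (j : ℕ) (hj2 : 2 ≤ j) (hjn : j ≤ n)
    (σ ρc : ℝ)
    (hσlo : (∑ k ∈ Finset.Icc j n, q k)
              - (∑ k ∈ Finset.Icc j n, p k) * (q j / p j) ≤ σ)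
    (hσhi : σ ≤ (∑ k ∈ Finset.Icc (j-1) n, q k)
              - (∑ k ∈ Finset.Icc (j-1) n, p k) * (q (j-1) / p (j-1)))
    (hρc : ρc = ((∑ k ∈ Finset.Icc 1 (j-1), p k) / (∑ k ∈ Finset.Icc j n, p k))
              * ((∑ k ∈ Finset.Icc j n, q k) - σ) - ∑ k ∈ Finset.Icc 1 (j-1), q k)
    (r s t : ℕ → ℝ)
    (hr : ∀ k, r k = if k ≤ j - 1 then p k * (1 + ρc - σ) - q k else 0)
    (hs : ∀ k, s k = if j ≤ k then q k - p k * (1 + ρc - σ) else 0)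
    (ht : ∀ k, t k = (q k + r k - s k) / (1 + ρc - σ)) :
    (∀ k ∈ Finset.Icc 1 n, 0 ≤ r k) ∧
    (∀ k ∈ Finset.Icc 1 n, 0 ≤ s k) ∧
    (∑ k ∈ Finset.Icc 1 n, r k = ρc) ∧
    (∑ k ∈ Finset.Icc 1 n, s k = σ) ∧
    (∀ k ∈ Finset.Icc 1 n, t k = p k) ∧
    (∑ k ∈ Finset.Icc 1 n, t k * Real.logb 2 (t k / p k) = 0) :=
  critical_threshold_zero_risk_general n q p hq hp hqsum hpsum hmono j hj2 hjn σ ρc hσlo hσhi hρc r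
    s t hr hs ht
end

section
/- In the low-rate regime, the privacy-forgery-suppression function admits the first-order expansion with gradient ∇R(0,0) = (log(q_1/p_1) − D(q‖p), D(q‖p) − log(q_n/p_n)). Concretely: if q ≠ p and the indices i, j satisfy q_1/p_1 = ... = q_i/p_i < q_{i+1}/p_{i+1} and q_{j−1}/p_{j−1} > q_j/p_j = ... = q_n/p_n, then for the function R(ρ,σ) = D((q̃ + ρe_1 − σe_m)/(1+ρ−σ) ‖ p̃) — where q̃ = (Q_i, q_{i+1},...,q_{j−1}, S_j), p̃ = (P_i, p_{i+1},...,p_{j−1}, T_j), m = j−i+1, and e_1, e_m are standard basis vectors — the partial derivatives at (0,0) are ∂R/∂ρ(0,0) = log(q_1/p_1) − D(q‖p) and ∂R/∂σ(0,0) = D(q‖p) − log(q_n/p_n). -/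
/-!
Every summand of `R` has the form `x t * logb 2 (x t / c)`, with derivative
`x' * (logb 2 (x / c) + 1 / log 2)`. Along either coordinate axis the perturbed masses keep
summing to one, so the `1 / log 2` contributions cancel and `∂R` is
`∑ x'ₖ * logb 2 (xₖ / cₖ)`, which works out to `logb 2 (Q / P) - R 0 0` and
`R 0 0 - logb 2 (S / T)`. Finally `R 0 0` is `D(q‖p)`, because `q / p` is constant on the two
merged blocks.
-/

open Finset Real

theorem HasDerivAt.mul_logb_div {f : ℝ → ℝ} {f' x b P : ℝ} (hf : HasDerivAt f f' x)
    (hfx : f x ≠ 0) (hP : P ≠ 0) :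
    HasDerivAt (fun t => f t * logb b (f t / P))
      (f' * (logb b (f x / P) + 1 / Real.log b)) x := by
  have hlog := ((hf.div_const P).log (div_ne_zero hfx hP)).div_const (Real.log b)
  refine (hf.mul hlog).congr_deriv ?_
  rw [logb]
  field_simp

theorem HasDerivAt.div_mul_logb_div {f g : ℝ → ℝ} {f' g' x b P : ℝ} (hf : HasDerivAt f f' x)
    (hg : HasDerivAt g g' x) (hfx : f x ≠ 0) (hgx : g x ≠ 0) (hP : P ≠ 0) :
    HasDerivAt (fun t => f t / g t * logb b (f t / (g t * P)))
      ((f' * g x - f x * g') / g x ^ 2 * (logb b (f x / (g x * P)) + 1 / Real.log b)) x := by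
  simpa only [Pi.div_apply, div_div] using
    (hf.div hg hgx).mul_logb_div (b := b) (div_ne_zero hfx hgx) hP

theorem Finset.sum_Icc_eq_add_add {M : Type*} [AddCommMonoid M] (f : ℕ → M) {a i j n : ℕ}
    (hai : a ≤ i + 1) (hij : i < j) (hjn : j ≤ n + 1) :
    ∑ k ∈ Icc a n, f k =
      ∑ k ∈ Icc a i, f k + ∑ k ∈ Icc (i + 1) (j - 1), f k + ∑ k ∈ Icc j n, f k := by
  have hj : j - 1 + 1 = j := by omega
  simp only [← Ico_add_one_right_eq_Icc, hj]
  rw [sum_Ico_consecutive f hai hij, sum_Ico_consecutive f (by omega) hjn]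

theorem Finset.sum_div_sum_eq_of_div_eq {ι 𝕜 : Type*} [Field 𝕜] {s : Finset ι} {q p : ι → 𝕜}
    {r : 𝕜}
    (hp : ∀ k ∈ s, p k ≠ 0) (hsum : ∑ k ∈ s, p k ≠ 0) (h : ∀ k ∈ s, q k / p k = r) :
    (∑ k ∈ s, q k) / ∑ k ∈ s, p k = r := by
  rw [div_eq_iff hsum, mul_sum]
  exact sum_congr rfl fun k hk => by rw [← h k hk, div_mul_cancel₀ _ (hp k hk)]

theorem Finset.sum_mul_logb_div_of_div_eq {ι : Type*} {s : Finset ι} {q p : ι → ℝ} {b r : ℝ}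
    (h : ∀ k ∈ s, q k / p k = r) :
    ∑ k ∈ s, q k * logb b (q k / p k) = (∑ k ∈ s, q k) * logb b r := by
  rw [sum_mul]
  exact sum_congr rfl fun k hk => by rw [h k hk]

/-- `D((q̃ + ρ e₁ - σ e_m) / (1 + ρ - σ) ‖ p̃)`, where `q̃` and `p̃` have first entries `Q`, `P`,
last entries `S`, `T`, and middle entries `q k`, `p k` for `k ∈ s`. -/
noncomputable def groupedDivergence {ι : Type*} (b Q P S T : ℝ) (s : Finset ι) (q p : ι → ℝ)
    (ρ σ : ℝ) : ℝ :=
  (Q + ρ) / (1 + ρ - σ) * logb b ((Q + ρ) / ((1 + ρ - σ) * P))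
    + ∑ k ∈ s, q k / (1 + ρ - σ) * logb b (q k / ((1 + ρ - σ) * p k))
    + (S - σ) / (1 + ρ - σ) * logb b ((S - σ) / ((1 + ρ - σ) * T))

section
variable {ι : Type*} {b Q P S T : ℝ} {s : Finset ι} {q p : ι → ℝ}

theorem groupedDivergence_zero_zero :
    groupedDivergence b Q P S T s q p 0 0 =
      Q * logb b (Q / P) + ∑ k ∈ s, q k * logb b (q k / p k) + S * logb b (S / T) := by
  simp [groupedDivergence]

theorem hasDerivAt_groupedDivergence_comp {ρ σ : ℝ → ℝ} {u v : ℝ} (hρ : HasDerivAt ρ u 0)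
    (hσ : HasDerivAt σ v 0) (hρ0 : ρ 0 = 0) (hσ0 : σ 0 = 0) (hQ : Q ≠ 0) (hP : P ≠ 0)
    (hS : S ≠ 0) (hT : T ≠ 0) (hq : ∀ k ∈ s, q k ≠ 0) (hp : ∀ k ∈ s, p k ≠ 0)
    (hmass : Q + ∑ k ∈ s, q k + S = 1) :
    HasDerivAt (fun t => groupedDivergence b Q P S T s q p (ρ t) (σ t))
      (u * (logb b (Q / P) - groupedDivergence b Q P S T s q p 0 0)
        + v * (groupedDivergence b Q P S T s q p 0 0 - logb b (S / T))) 0 := by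
  have hd : HasDerivAt (fun t => 1 + ρ t - σ t) (u - v) 0 := (hρ.const_add 1).sub hσ
  have hd0 : 1 + ρ 0 - σ 0 ≠ 0 := by simp [hρ0, hσ0]
  have hfirst := (hρ.const_add Q).div_mul_logb_div (b := b) hd (by simpa [hρ0]) hd0 hP
  have hmid := HasDerivAt.fun_sum (u := s) fun k hk =>
    (hasDerivAt_const (0 : ℝ) (q k)).div_mul_logb_div (b := b) hd (hq k hk) hd0 (hp k hk)
  have hlast := (hσ.const_sub S).div_mul_logb_div (b := b) hd (by simpa [hσ0]) hd0 hT
  simp only [hρ0, hσ0, add_zero, sub_zero, zero_sub, one_pow, one_mul, mul_one,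
    div_one] at hfirst hmid hlast
  refine ((hfirst.add hmid).add hlast).congr_deriv ?_
  have hmid_term : ∀ k ∈ s, -(q k * (u - v)) * (logb b (q k / p k) + 1 / Real.log b) =
      -(u - v) * (q k * logb b (q k / p k)) - (u - v) / Real.log b * q k :=
    fun k _ => by ring
  rw [sum_congr rfl hmid_term, sum_sub_distrib, ← mul_sum, ← mul_sum, groupedDivergence_zero_zero]
  linear_combination -(u - v) / Real.log b * hmass
end

theorem gradient_at_origin_general
    (n : ℕ) (q p : ℕ → ℝ)
    (hq : ∀ k ∈ Finset.Icc 1 n, 0 < q k) (hp : ∀ k ∈ Finset.Icc 1 n, 0 < p k)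
    (hqsum : ∑ k ∈ Finset.Icc 1 n, q k = 1)
    (i j : ℕ) (hi : 1 ≤ i) (hij : i < j) (hj : j ≤ n)
    (hieq : ∀ k, 1 ≤ k → k ≤ i → q k / p k = q 1 / p 1)
    (hjeq : ∀ k, j ≤ k → k ≤ n → q k / p k = q n / p n)
    (R : ℝ → ℝ → ℝ)
    (hR : ∀ ρ σ : ℝ, R ρ σ =
        ((∑ m ∈ Finset.Icc 1 i, q m) + ρ) / (1 + ρ - σ)
          * Real.logb 2 (((∑ m ∈ Finset.Icc 1 i, q m) + ρ)
              / ((1 + ρ - σ) * (∑ m ∈ Finset.Icc 1 i, p m)))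
        + (∑ k ∈ Finset.Icc (i+1) (j-1), q k / (1 + ρ - σ)
            * Real.logb 2 (q k / ((1 + ρ - σ) * p k)))
        + ((∑ m ∈ Finset.Icc j n, q m) - σ) / (1 + ρ - σ)
            * Real.logb 2 (((∑ m ∈ Finset.Icc j n, q m) - σ)
                / ((1 + ρ - σ) * (∑ m ∈ Finset.Icc j n, p m)))) :
    HasDerivAt (fun ρ => R ρ 0)
      (Real.logb 2 (q 1 / p 1)
        - ∑ k ∈ Finset.Icc 1 n, q k * Real.logb 2 (q k / p k)) 0 ∧
    HasDerivAt (fun σ => R 0 σ)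
      ((∑ k ∈ Finset.Icc 1 n, q k * Real.logb 2 (q k / p k))
        - Real.logb 2 (q n / p n)) 0 := by
  set Q := ∑ m ∈ Icc 1 i, q m
  set P := ∑ m ∈ Icc 1 i, p m
  set S := ∑ m ∈ Icc j n, q m
  set T := ∑ m ∈ Icc j n, p m
  obtain rfl : R = groupedDivergence 2 Q P S T (Icc (i + 1) (j - 1)) q p :=
    funext fun ρ => funext (hR ρ)
  have hsplit (f : ℕ → ℝ) := sum_Icc_eq_add_add f (by omega : 1 ≤ i + 1) hij (by omega : j ≤ n + 1)
  have hlow : Icc 1 i ⊆ Icc 1 n := Icc_subset_Icc_right (by omega)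
  have hmid : Icc (i + 1) (j - 1) ⊆ Icc 1 n := Icc_subset_Icc (by omega) (by omega)
  have hhigh : Icc j n ⊆ Icc 1 n := Icc_subset_Icc_left (by omega)
  have hQ : 0 < Q := sum_pos (fun k hk => hq k (hlow hk)) (nonempty_Icc.2 hi)
  have hP : 0 < P := sum_pos (fun k hk => hp k (hlow hk)) (nonempty_Icc.2 hi)
  have hS : 0 < S := sum_pos (fun k hk => hq k (hhigh hk)) (nonempty_Icc.2 hj)
  have hT : 0 < T := sum_pos (fun k hk => hp k (hhigh hk)) (nonempty_Icc.2 hj)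
  have hlow_ratio (k) (hk : k ∈ Icc 1 i) : q k / p k = q 1 / p 1 :=
    hieq k (mem_Icc.1 hk).1 (mem_Icc.1 hk).2
  have hhigh_ratio (k) (hk : k ∈ Icc j n) : q k / p k = q n / p n :=
    hjeq k (mem_Icc.1 hk).1 (mem_Icc.1 hk).2
  have hQP : Q / P = q 1 / p 1 :=
    sum_div_sum_eq_of_div_eq (fun k hk => (hp k (hlow hk)).ne') hP.ne' hlow_ratio
  have hST : S / T = q n / p n :=
    sum_div_sum_eq_of_div_eq (fun k hk => (hp k (hhigh hk)).ne') hT.ne' hhigh_ratio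
  have hD : ∑ k ∈ Icc 1 n, q k * logb 2 (q k / p k) =
      groupedDivergence 2 Q P S T (Icc (i + 1) (j - 1)) q p 0 0 := by
    rw [groupedDivergence_zero_zero, hsplit, sum_mul_logb_div_of_div_eq hlow_ratio,
      sum_mul_logb_div_of_div_eq hhigh_ratio, hQP, hST]
  have hline {ρ σ : ℝ → ℝ} {u v : ℝ} (hρ : HasDerivAt ρ u 0) (hσ : HasDerivAt σ v 0)
      (hρ0 : ρ 0 = 0) (hσ0 : σ 0 = 0) :=
    hasDerivAt_groupedDivergence_comp (b := 2) hρ hσ hρ0 hσ0 hQ.ne' hP.ne' hS.ne' hT.ne'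
      (fun k hk => (hq k (hmid hk)).ne') (fun k hk => (hp k (hmid hk)).ne')
      (by rw [← hsplit, hqsum])
  rw [hD, ← hQP, ← hST]
  constructor
  · simpa using hline (hasDerivAt_id 0) (hasDerivAt_const 0 0) rfl rfl
  · simpa using hline (hasDerivAt_const 0 0) (hasDerivAt_id 0) rfl rfl

/-- Gradient of the privacy-forgery-suppression function at the origin:
∂R/∂ρ(0,0) = log(q₁/p₁) − D(q‖p) and ∂R/∂σ(0,0) = D(q‖p) − log(q_n/p_n),
where R(ρ,σ) is the grouped KL divergence D((q̃+ρe₁−σe_m)/(1+ρ−σ) ‖ p̃). -/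
theorem gradient_at_origin
    (n : ℕ) (hn : 2 ≤ n) (q p : ℕ → ℝ)
    (hq : ∀ k ∈ Finset.Icc 1 n, 0 < q k) (hp : ∀ k ∈ Finset.Icc 1 n, 0 < p k)
    (hqsum : ∑ k ∈ Finset.Icc 1 n, q k = 1) (hpsum : ∑ k ∈ Finset.Icc 1 n, p k = 1)
    (hmono : ∀ k, 1 ≤ k → k < n → q k / p k ≤ q (k+1) / p (k+1))
    (hne : ∃ k ∈ Finset.Icc 1 n, q k ≠ p k)
    (i j : ℕ) (hi : 1 ≤ i) (hij : i < j) (hj : j ≤ n)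
    (hieq : ∀ k, 1 ≤ k → k ≤ i → q k / p k = q 1 / p 1)
    (hilt : q i / p i < q (i+1) / p (i+1))
    (hjeq : ∀ k, j ≤ k → k ≤ n → q k / p k = q n / p n)
    (hjlt : q (j-1) / p (j-1) < q j / p j)
    (R : ℝ → ℝ → ℝ)
    (hR : ∀ ρ σ : ℝ, R ρ σ =
        ((∑ m ∈ Finset.Icc 1 i, q m) + ρ) / (1 + ρ - σ)
          * Real.logb 2 (((∑ m ∈ Finset.Icc 1 i, q m) + ρ)
              / ((1 + ρ - σ) * (∑ m ∈ Finset.Icc 1 i, p m)))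
        + (∑ k ∈ Finset.Icc (i+1) (j-1), q k / (1 + ρ - σ)
            * Real.logb 2 (q k / ((1 + ρ - σ) * p k)))
        + ((∑ m ∈ Finset.Icc j n, q m) - σ) / (1 + ρ - σ)
            * Real.logb 2 (((∑ m ∈ Finset.Icc j n, q m) - σ)
                / ((1 + ρ - σ) * (∑ m ∈ Finset.Icc j n, p m)))) :
    HasDerivAt (fun ρ => R ρ 0)
      (Real.logb 2 (q 1 / p 1)
        - ∑ k ∈ Finset.Icc 1 n, q k * Real.logb 2 (q k / p k)) 0 ∧
    HasDerivAt (fun σ => R 0 σ)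
      ((∑ k ∈ Finset.Icc 1 n, q k * Real.logb 2 (q k / p k))
        - Real.logb 2 (q n / p n)) 0 :=
  gradient_at_origin_general n q p hq hp hqsum i j hi hij hj hieq hjeq R hR
end
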